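/- Let (S, (A_i)_{i=1}^m, H, P, (R_†)) be a tabular episodic Markov game equipped with an attacker reward function R_{†,h} : S × A → [0,1], let π* be any deterministic product policy, and let π be any Markov product policy. Then for every initial state s₁: V^{π*}_{†,1}(s₁) − V^{π}_{†,1}(s₁) ≤ H · E[ ∑_{h=1}^H ∑_{i=1}^m 1(a_{i,h} ≠ π*_{i,h}(s_h)) ], where the expectation is over trajectories generated under π with transitions P started at s₁. In particular, the attack loss Loss2 with respect to the attacker's reward is at most H times the attack loss Loss1 counting deviations from the target policy. -/

import Mathlib

open Finset

namespace MGAttack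

variable {S : Type} [Fintype S] [DecidableEq S]
variable {m : ℕ} {A : Fin m → Type} [∀ i, Fintype (A i)] [∀ i, DecidableEq (A i)]

/-- `VA P f π n h s`: expected sum of `f` over `n` steps starting from step `h` in
state `s`, when joint actions are drawn from the joint pmf `π` and states evolve
according to `P`.  With `f` a mean-reward function this is the value function. -/
noncomputable def VA (P : ℕ → S → (∀ i, A i) → S → ℝ) (f : ℕ → S → (∀ i, A i) → ℝ)
    (π : ℕ → S → (∀ i, A i) → ℝ) : ℕ → ℕ → S → ℝ
  | 0, _, _ => 0
  | n + 1, h, s => ∑ a, π h s a * (f h s a + ∑ s', P h s a s' * VA P f π n (h + 1) s')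

/-- Value function `V^π_h(s)` for horizon `H` (steps `h, h+1, …, H`). -/
noncomputable def Vf (P : ℕ → S → (∀ i, A i) → S → ℝ) (R : ℕ → S → (∀ i, A i) → ℝ)
    (π : ℕ → S → (∀ i, A i) → ℝ) (H h : ℕ) (s : S) : ℝ :=
  VA P R π (H + 1 - h) h s

/-- Q-function `Q^π_h(s,a)` for horizon `H`. -/
noncomputable def Qf (P : ℕ → S → (∀ i, A i) → S → ℝ) (R : ℕ → S → (∀ i, A i) → ℝ)
    (π : ℕ → S → (∀ i, A i) → ℝ) (H h : ℕ) (s : S) (a : ∀ i, A i) : ℝ :=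
  R h s a + ∑ s', P h s a s' * VA P R π (H - h) (h + 1) s'

/-- Joint pmf of a Markov product policy. -/
noncomputable def jp (π : ∀ i : Fin m, ℕ → S → A i → ℝ) : ℕ → S → (∀ i, A i) → ℝ :=
  fun h s a => ∏ i, π i h s (a i)

/-- Joint action prescribed by a deterministic (product) policy. -/
def tgtJ (τ : ∀ i : Fin m, ℕ → S → A i) (h : ℕ) (s : S) : ∀ i, A i := fun i => τ i h s

/-- A deterministic policy viewed as a (point-mass) stochastic policy. -/
noncomputable def detP (τ : ∀ i : Fin m, ℕ → S → A i) : ∀ i : Fin m, ℕ → S → A i → ℝ :=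
  fun i h s b => if b = τ i h s then 1 else 0

/-- `P` is a transition kernel for the steps `1, …, H`. -/
def IsKernel (H : ℕ) (P : ℕ → S → (∀ i, A i) → S → ℝ) : Prop :=
  ∀ h ∈ Finset.Icc 1 H, ∀ s a, (∀ s', 0 ≤ P h s a s') ∧ ∑ s', P h s a s' = 1

/-- `π` is a Markov product policy for the steps `1, …, H`. -/
def IsPolicy (H : ℕ) (π : ∀ i : Fin m, ℕ → S → A i → ℝ) : Prop :=
  ∀ i : Fin m, ∀ h ∈ Finset.Icc 1 H, ∀ s, (∀ b, 0 ≤ π i h s b) ∧ ∑ b, π i h s b = 1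

/-- `πi` is a Markov policy for the single agent `i`. -/
def IsPolicyI (H : ℕ) {i : Fin m} (πi : ℕ → S → A i → ℝ) : Prop :=
  ∀ h ∈ Finset.Icc 1 H, ∀ s, (∀ b, 0 ≤ πi h s b) ∧ ∑ b, πi h s b = 1

/-- The mean rewards all lie in `[0,1]`. -/
def IsReward (H : ℕ) (R : Fin m → ℕ → S → (∀ i, A i) → ℝ) : Prop :=
  ∀ i, ∀ h ∈ Finset.Icc 1 H, ∀ s a, R i h s a ∈ Set.Icc (0 : ℝ) 1

/-- `d_h(s,a) = m/2 + (1/2) ∑_i 1(a_i = π†_{i,h}(s))` of the `d`-portion attack. -/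
noncomputable def dfun (τ : ∀ i : Fin m, ℕ → S → A i) (h : ℕ) (s : S) (a : ∀ i, A i) : ℝ :=
  (m : ℝ) / 2 + (∑ i, if a i = τ i h s then (1 : ℝ) else 0) / 2

/-- Post-attack mean rewards of the `d`-portion attack (target `τ`, worse policy `τ'`). -/
noncomputable def Rport (R : Fin m → ℕ → S → (∀ i, A i) → ℝ) (τ τ' : ∀ i : Fin m, ℕ → S → A i)
    (i : Fin m) : ℕ → S → (∀ i, A i) → ℝ :=
  fun h s a => (dfun τ h s a / m) * R i h s (tgtJ τ h s)
    + (1 - dfun τ h s a / m) * R i h s (tgtJ τ' h s)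

/-- Post-attack transition probabilities of the `d`-portion attack. -/
noncomputable def Pport (P : ℕ → S → (∀ i, A i) → S → ℝ) (τ τ' : ∀ i : Fin m, ℕ → S → A i) :
    ℕ → S → (∀ i, A i) → S → ℝ :=
  fun h s a s' => (dfun τ h s a / m) * P h s (tgtJ τ h s) s'
    + (1 - dfun τ h s a / m) * P h s (tgtJ τ' h s) s'

/-- `Δ^{†−}_{i,h}(s) = Q^{π†}_{i,h}(s, π†_h(s)) − Q^{π†}_{i,h}(s, π⁻_h(s))` (original game). -/
noncomputable def Δdag (P : ℕ → S → (∀ i, A i) → S → ℝ) (R : Fin m → ℕ → S → (∀ i, A i) → ℝ)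
    (τ τ' : ∀ i : Fin m, ℕ → S → A i) (H : ℕ) (i : Fin m) (h : ℕ) (s : S) : ℝ :=
  Qf P (R i) (jp (detP τ)) H h s (tgtJ τ h s) - Qf P (R i) (jp (detP τ)) H h s (tgtJ τ' h s)

/-- Post-attack mean rewards of the `η`-gap attack; `ΔR i` is the reward spread of agent `i`. -/
noncomputable def Rgap (R : Fin m → ℕ → S → (∀ i, A i) → ℝ) (τ : ∀ i : Fin m, ℕ → S → A i)
    (η : ℝ) (ΔR : Fin m → ℝ) (H : ℕ) (i : Fin m) : ℕ → S → (∀ i, A i) → ℝ :=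
  fun h s a =>
    if a = tgtJ τ h s then R i h s a
    else R i h s (tgtJ τ h s) - (η + ((H - h : ℕ) : ℝ) * ΔR i) * (if a i = τ i h s then 0 else 1)

/-- Post-attack mean rewards of the mixed attack. -/
noncomputable def Rmix (R : Fin m → ℕ → S → (∀ i, A i) → ℝ) (τ : ∀ i : Fin m, ℕ → S → A i)
    (i : Fin m) : ℕ → S → (∀ i, A i) → ℝ :=
  fun h s a => (if a i = τ i h s then (1 : ℝ) else 0) * R i h s (tgtJ τ h s)

/-- Post-attack transition probabilities of the mixed attack. -/
def Pmix (P : ℕ → S → (∀ i, A i) → S → ℝ) (τ : ∀ i : Fin m, ℕ → S → A i) :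
    ℕ → S → (∀ i, A i) → S → ℝ :=
  fun h s a s' => P h s (tgtJ τ h s) s'

/-- Probability of being in state `s'` after `n` steps, starting from `(h, s)` and following
the deterministic policy `τ` under the transitions `P`. -/
noncomputable def reach (P : ℕ → S → (∀ i, A i) → S → ℝ) (τ : ∀ i : Fin m, ℕ → S → A i) :
    ℕ → ℕ → S → S → ℝ
  | 0, _, s, s' => if s' = s then 1 else 0
  | n + 1, h, s, s' => ∑ t, P h s (tgtJ τ h s) t * reach P τ n (h + 1) t s'

/-- Expected sum of a state-dependent function along the Markov chain `Ps`. -/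
noncomputable def SSum (Ps : ℕ → S → S → ℝ) (f : ℕ → S → ℝ) : ℕ → ℕ → S → ℝ
  | 0, _, _ => 0
  | n + 1, h, s => f h s + ∑ s', Ps h s s' * SSum Ps f n (h + 1) s'

end MGAttack

namespace MGAttack

/-!
The proof is a performance-difference induction on the remaining horizon. At step `h`, with
`a` drawn from `π`, the gap `Q^τ_h(s, τ_h(s)) - Q^π_h(s, a)` splits into the one-step gap
`Q^τ_h(s, τ_h(s)) - Q^τ_h(s, a)` and the expected value gap at step `h + 1`. The first
vanishes when no agent deviates and is otherwise at most the remaining horizon, hence at most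
`H` times the number of deviating agents; the second is handled by induction.
-/

section Expectation

variable {ι : Type*} [Fintype ι] {w : ι → ℝ}

lemma sum_mul_mem_Icc (hw0 : ∀ i, 0 ≤ w i) (hw1 : ∑ i, w i = 1) {g : ι → ℝ} {lo hi : ℝ}
    (hg : ∀ i, g i ∈ Set.Icc lo hi) : ∑ i, w i * g i ∈ Set.Icc lo hi := by
  have hconst : ∀ c : ℝ, ∑ i, w i * c = c := fun c => by rw [← sum_mul, hw1, one_mul]
  constructor
  · calc lo = ∑ i, w i * lo := (hconst lo).symm
      _ ≤ ∑ i, w i * g i := sum_le_sum fun i _ => mul_le_mul_of_nonneg_left (hg i).1 (hw0 i)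
  · calc ∑ i, w i * g i ≤ ∑ i, w i * hi :=
          sum_le_sum fun i _ => mul_le_mul_of_nonneg_left (hg i).2 (hw0 i)
      _ = hi := hconst hi

lemma sum_mul_sub_sum_mul_le (hw0 : ∀ i, 0 ≤ w i) {g₁ g₂ k : ι → ℝ} {c : ℝ}
    (h : ∀ i, g₁ i - g₂ i ≤ c * k i) :
    ∑ i, w i * g₁ i - ∑ i, w i * g₂ i ≤ c * ∑ i, w i * k i := by
  rw [← sum_sub_distrib, mul_sum]
  exact sum_le_sum fun i _ => by nlinarith [mul_le_mul_of_nonneg_left (h i) (hw0 i)]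

lemma add_sum_mul_mem_Icc (hw0 : ∀ i, 0 ≤ w i) (hw1 : ∑ i, w i = 1) {r : ℝ}
    (hr : r ∈ Set.Icc (0 : ℝ) 1) {V : ι → ℝ} {n : ℕ} (hV : ∀ i, V i ∈ Set.Icc (0 : ℝ) n) :
    r + ∑ i, w i * V i ∈ Set.Icc (0 : ℝ) (n + 1 : ℕ) := by
  obtain ⟨hV0, hVn⟩ := sum_mul_mem_Icc hw0 hw1 hV
  push_cast
  exact ⟨by linarith [hr.1], by linarith [hr.2]⟩

end Expectation

variable {S : Type} {m : ℕ} {A : Fin m → Type}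

def IsJointPolicy [∀ i, Fintype (A i)] (H : ℕ) (ρ : ℕ → S → (∀ i, A i) → ℝ) : Prop :=
  ∀ h ∈ Icc 1 H, ∀ s, (∀ a, 0 ≤ ρ h s a) ∧ ∑ a, ρ h s a = 1

lemma IsPolicy.isJointPolicy_jp [∀ i, Fintype (A i)] {H : ℕ}
    {π : ∀ i : Fin m, ℕ → S → A i → ℝ} (hπ : IsPolicy H π) : IsJointPolicy H (jp π) := by
  intro h hh s
  refine ⟨fun a => prod_nonneg fun i _ => (hπ i h hh s).1 (a i), ?_⟩
  rw [show ∑ a, jp π h s a = ∏ i, ∑ b, π i h s b by rw [prod_univ_sum]; rfl]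
  exact prod_eq_one fun i _ => (hπ i h hh s).2

lemma isPolicy_detP [∀ i, Fintype (A i)] [∀ i, DecidableEq (A i)] (H : ℕ)
    (τ : ∀ i : Fin m, ℕ → S → A i) : IsPolicy H (detP τ) :=
  fun i _ _ s => ⟨fun b => by unfold detP; split_ifs <;> norm_num, by simp [detP]⟩

lemma jp_detP_apply [∀ i, DecidableEq (A i)] (τ : ∀ i : Fin m, ℕ → S → A i) (h : ℕ) (s : S)
    (a : ∀ i, A i) : jp (detP τ) h s a = if a = tgtJ τ h s then 1 else 0 := by
  split_ifs with ha
  · simp [ha, jp, detP, tgtJ]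
  · obtain ⟨i, hi⟩ := Function.ne_iff.mp ha
    exact prod_eq_zero (mem_univ i) (if_neg hi)

lemma VA_succ [Fintype S] [∀ i, Fintype (A i)] (P : ℕ → S → (∀ i, A i) → S → ℝ)
    (f : ℕ → S → (∀ i, A i) → ℝ) (ρ : ℕ → S → (∀ i, A i) → ℝ) (n h : ℕ) (s : S) :
    VA P f ρ (n + 1) h s
      = ∑ a, ρ h s a * (f h s a + ∑ s', P h s a s' * VA P f ρ n (h + 1) s') :=
  rfl

lemma VA_detP_succ [Fintype S] [∀ i, Fintype (A i)] [∀ i, DecidableEq (A i)]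
    (P : ℕ → S → (∀ i, A i) → S → ℝ) (f : ℕ → S → (∀ i, A i) → ℝ)
    (τ : ∀ i : Fin m, ℕ → S → A i) (n h : ℕ) (s : S) :
    VA P f (jp (detP τ)) (n + 1) h s
      = f h s (tgtJ τ h s)
        + ∑ s', P h s (tgtJ τ h s) s' * VA P f (jp (detP τ)) n (h + 1) s' := by
  simp [VA_succ, jp_detP_apply, ite_mul]

lemma VA_mem_Icc [Fintype S] [∀ i, Fintype (A i)] {H : ℕ} {P : ℕ → S → (∀ i, A i) → S → ℝ}
    (hP : IsKernel H P) {f : ℕ → S → (∀ i, A i) → ℝ}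
    (hf : ∀ h ∈ Icc 1 H, ∀ s a, f h s a ∈ Set.Icc (0 : ℝ) 1)
    {ρ : ℕ → S → (∀ i, A i) → ℝ} (hρ : IsJointPolicy H ρ) :
    ∀ n h, 1 ≤ h → n + h ≤ H + 1 → ∀ s, VA P f ρ n h s ∈ Set.Icc (0 : ℝ) n := by
  intro n
  induction n with
  | zero => intro h _ _ s; simp [VA]
  | succ n ih =>
    intro h h1 hle s
    have hh : h ∈ Icc 1 H := mem_Icc.mpr ⟨h1, by omega⟩
    rw [VA_succ]
    exact sum_mul_mem_Icc (hρ h hh s).1 (hρ h hh s).2 fun a =>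
      add_sum_mul_mem_Icc (hP h hh s a).1 (hP h hh s a).2 (hf h hh s a)
        fun s' => ih (h + 1) (by omega) (by omega) s'

def deviations [∀ i, DecidableEq (A i)] (τ : ∀ i : Fin m, ℕ → S → A i) :
    ℕ → S → (∀ i, A i) → ℝ :=
  fun h s a => ∑ j, if a j = τ j h s then 0 else 1

lemma deviations_tgtJ [∀ i, DecidableEq (A i)] (τ : ∀ i : Fin m, ℕ → S → A i) (h : ℕ)
    (s : S) : deviations τ h s (tgtJ τ h s) = 0 := by
  simp [deviations, tgtJ]

lemma one_le_deviations [∀ i, DecidableEq (A i)] {τ : ∀ i : Fin m, ℕ → S → A i} {h : ℕ}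
    {s : S} {a : ∀ i, A i} (ha : a ≠ tgtJ τ h s) : 1 ≤ deviations τ h s a := by
  obtain ⟨j, hj⟩ := Function.ne_iff.mp ha
  calc (1 : ℝ) = if a j = τ j h s then 0 else 1 := (if_neg hj).symm
    _ ≤ deviations τ h s a :=
      single_le_sum (f := fun j => if a j = τ j h s then (0 : ℝ) else 1)
        (fun j _ => by split_ifs <;> norm_num) (mem_univ j)

/- A deviation at step `h` loses at most the whole remaining value `n + 1 ≤ H` of `τ`, and it
is charged to a deviation count that is at least `1`. -/
lemma Q_detP_sub_le [Fintype S] [∀ i, Fintype (A i)] [∀ i, DecidableEq (A i)] {H : ℕ}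
    {P : ℕ → S → (∀ i, A i) → S → ℝ} (hP : IsKernel H P) {Rd : ℕ → S → (∀ i, A i) → ℝ}
    (hRd : ∀ h ∈ Icc 1 H, ∀ s a, Rd h s a ∈ Set.Icc (0 : ℝ) 1)
    (τ : ∀ i : Fin m, ℕ → S → A i) {n h : ℕ} (h1 : 1 ≤ h) (hle : n + 1 + h ≤ H + 1)
    (s : S) (a : ∀ i, A i) :
    (Rd h s (tgtJ τ h s)
        + ∑ s', P h s (tgtJ τ h s) s' * VA P Rd (jp (detP τ)) n (h + 1) s')
      - (Rd h s a + ∑ s', P h s a s' * VA P Rd (jp (detP τ)) n (h + 1) s')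
      ≤ H * deviations τ h s a := by
  by_cases ha : a = tgtJ τ h s
  · simp [ha, deviations_tgtJ]
  have hh : h ∈ Icc 1 H := mem_Icc.mpr ⟨h1, by omega⟩
  have hV := VA_mem_Icc hP hRd (isPolicy_detP H τ).isJointPolicy_jp n (h + 1) (by omega)
    (by omega)
  have hQ : ∀ b, Rd h s b + ∑ s', P h s b s' * VA P Rd (jp (detP τ)) n (h + 1) s'
      ∈ Set.Icc (0 : ℝ) (n + 1 : ℕ) := fun b =>
    add_sum_mul_mem_Icc (hP h hh s b).1 (hP h hh s b).2 (hRd h hh s b) hV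
  have hnH : ((n + 1 : ℕ) : ℝ) ≤ H := by exact_mod_cast (by omega : n + 1 ≤ H)
  nlinarith [(hQ (tgtJ τ h s)).2, (hQ a).1, one_le_deviations ha]

lemma VA_detP_sub_VA_le [Fintype S] [∀ i, Fintype (A i)] [∀ i, DecidableEq (A i)] {H : ℕ}
    {P : ℕ → S → (∀ i, A i) → S → ℝ} (hP : IsKernel H P) {Rd : ℕ → S → (∀ i, A i) → ℝ}
    (hRd : ∀ h ∈ Icc 1 H, ∀ s a, Rd h s a ∈ Set.Icc (0 : ℝ) 1)
    (τ : ∀ i : Fin m, ℕ → S → A i) {π : ∀ j : Fin m, ℕ → S → A j → ℝ} (hπ : IsPolicy H π) :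
    ∀ n h, 1 ≤ h → n + h ≤ H + 1 → ∀ s,
      VA P Rd (jp (detP τ)) n h s - VA P Rd (jp π) n h s
        ≤ H * VA P (deviations τ) (jp π) n h s := by
  intro n
  induction n with
  | zero => intro h _ _ s; simp [VA]
  | succ n ih =>
    intro h h1 hle s
    have hh : h ∈ Icc 1 H := mem_Icc.mpr ⟨h1, by omega⟩
    obtain ⟨hπ0, hπ1⟩ := hπ.isJointPolicy_jp h hh s
    rw [VA_detP_succ, VA_succ, VA_succ]
    set Qτ := Rd h s (tgtJ τ h s)
      + ∑ s', P h s (tgtJ τ h s) s' * VA P Rd (jp (detP τ)) n (h + 1) s'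
    set Qπ := fun a => Rd h s a + ∑ s', P h s a s' * VA P Rd (jp π) n (h + 1) s'
    calc Qτ - ∑ a, jp π h s a * Qπ a
        = ∑ a, jp π h s a * Qτ - ∑ a, jp π h s a * Qπ a := by rw [← sum_mul, hπ1, one_mul]
      _ ≤ H * ∑ a, jp π h s a * (deviations τ h s a
            + ∑ s', P h s a s' * VA P (deviations τ) (jp π) n (h + 1) s') := by
          refine sum_mul_sub_sum_mul_le hπ0 fun a => ?_
          have hnow := Q_detP_sub_le hP hRd τ h1 hle s a
          have hnext := sum_mul_sub_sum_mul_le (hP h hh s a).1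
            fun s' => ih (h + 1) (by omega) (by omega) s'
          rw [mul_add]
          linarith

theorem stmt18_general {S : Type} [Fintype S]
    {m : ℕ} {A : Fin m → Type} [∀ i, Fintype (A i)] [∀ i, DecidableEq (A i)]
    (H : ℕ)
    (P : ℕ → S → (∀ i, A i) → S → ℝ) (hP : IsKernel H P)
    (Rd : ℕ → S → (∀ i, A i) → ℝ)
    (hRd : ∀ h ∈ Finset.Icc 1 H, ∀ s : S, ∀ a : ∀ j, A j, Rd h s a ∈ Set.Icc (0 : ℝ) 1)
    (τ : ∀ i : Fin m, ℕ → S → A i)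
    (π : ∀ j : Fin m, ℕ → S → A j → ℝ) (hπ : IsPolicy H π) (s₁ : S) :
    Vf P Rd (jp (detP τ)) H 1 s₁ - Vf P Rd (jp π) H 1 s₁
      ≤ H * VA P (fun h s a => ∑ j : Fin m, (if a j = τ j h s then (0 : ℝ) else 1))
          (jp π) H 1 s₁ := by
  simp only [Vf, Nat.add_sub_cancel]
  exact VA_detP_sub_VA_le hP hRd τ hπ H 1 le_rfl le_rfl s₁

/-- For the attacker's reward function `Rd` with values in `[0,1]`, the value gap between
any deterministic product policy `π*` and any Markov product policy `π` is at most `H`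
times the expected number of agent-steps on which `π` deviates from `π*`; in particular
`Loss2(K,H) ≤ H · Loss1(K,H)`. -/
theorem stmt18 {S : Type} [Fintype S] [DecidableEq S]
    {m : ℕ} {A : Fin m → Type} [∀ i, Fintype (A i)] [∀ i, DecidableEq (A i)]
    (H : ℕ) (hH : 1 ≤ H) (hm : 1 ≤ m)
    (P : ℕ → S → (∀ i, A i) → S → ℝ) (hP : IsKernel H P)
    (Rd : ℕ → S → (∀ i, A i) → ℝ)
    (hRd : ∀ h ∈ Finset.Icc 1 H, ∀ s : S, ∀ a : ∀ j, A j, Rd h s a ∈ Set.Icc (0 : ℝ) 1)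
    (τ : ∀ i : Fin m, ℕ → S → A i)
    (π : ∀ j : Fin m, ℕ → S → A j → ℝ) (hπ : IsPolicy H π) (s₁ : S) :
    Vf P Rd (jp (detP τ)) H 1 s₁ - Vf P Rd (jp π) H 1 s₁
      ≤ H * VA P (fun h s a => ∑ j : Fin m, (if a j = τ j h s then (0 : ℝ) else 1))
          (jp π) H 1 s₁ :=
  stmt18_general H P hP Rd hRd τ π hπ s₁

end MGAttack
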